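/- Suppose r + l ≤ n ≤ m, A ∈ ℝ^{m×n}, the m×r leading block A_{m,r} has rank r and the m×(r+l) leading block A_{m,r+l} has rank r+l. Then ‖A_{m,r}⁺‖ ≤ ‖A_{m,r+l}⁺‖, where M⁺ denotes the Moore–Penrose pseudoinverse and ‖·‖ the spectral norm. -/

import Mathlib

open Matrix

/-- The `j`-th largest singular value (1-indexed) of a real matrix, defined as the square
root of the `j`-th largest eigenvalue of `AᴴA`; it is `0` for `j` out of range. -/
noncomputable def singularValue {m n : ℕ} (A : Matrix (Fin m) (Fin n) ℝ) (j : ℕ) : ℝ :=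
  if h : 1 ≤ j ∧ j ≤ n then
    Real.sqrt ((show (Aᵀ * A).IsHermitian from Matrix.isHermitian_conjTranspose_mul_self A).eigenvalues
      (Tuple.sort (show (Aᵀ * A).IsHermitian from Matrix.isHermitian_conjTranspose_mul_self A).eigenvalues ⟨n - j, by omega⟩))
  else 0


/-- The Moore–Penrose pseudoinverse of a full-column-rank matrix: `A⁺ = (AᵀA)⁻¹ Aᵀ`. -/
noncomputable def pinvFCR {m n : ℕ} (A : Matrix (Fin m) (Fin n) ℝ) : Matrix (Fin n) (Fin m) ℝ :=
  (Aᵀ * A)⁻¹ * Aᵀ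


/-! Let `B` and `C` be the leading `r` and `r + l` columns. For `y = B⁺x`, the identity
`C⁺C = 1` applied to `(y, 0)` gives `|y| ≤ ‖C⁺‖ |By|`, and `By = BB⁺x` is the orthogonal
projection of `x` onto the range of `B`, so `|By| ≤ |x|`. Hence `|B⁺x| ≤ ‖C⁺‖ |x|` for all `x`,
and `σ₁(M) ≤ c` is exactly such a bound, since `σ₁(M)²` is the top eigenvalue of `MᵀM`, i.e. the
maximum of its Rayleigh quotient. -/

open scoped MatrixOrder

theorem Tuple.le_apply_sort_last {α : Type*} [LinearOrder α] {n : ℕ} (f : Fin (n + 1) → α)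
    (i : Fin (n + 1)) : f i ≤ f (Tuple.sort f (Fin.last n)) := by
  simpa using Tuple.monotone_sort f (Fin.le_last ((Tuple.sort f).symm i))

namespace Matrix

variable {m n : Type*} [Fintype n]

theorem dotProduct_transpose_mul_self_mulVec {R : Type*} [CommSemiring R] [Fintype m]
    (A : Matrix m n R) (x : n → R) : x ⬝ᵥ ((Aᵀ * A) *ᵥ x) = (A *ᵥ x) ⬝ᵥ (A *ᵥ x) := by
  rw [← mulVec_mulVec, dotProduct_mulVec, vecMul_transpose]

theorem mulVec_injective_of_rank_eq_card {K : Type*} [Field K] (A : Matrix m n K)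
    (h : A.rank = Fintype.card n) : Function.Injective A.mulVec := by
  have hker := LinearMap.finrank_range_add_finrank_ker A.mulVecLin
  rw [← Matrix.rank, h, Module.finrank_fintype_fun_eq_card, add_eq_left,
    Submodule.finrank_eq_zero] at hker
  exact LinearMap.ker_eq_bot.mp hker

theorem isUnit_transpose_mul_self_of_rank_eq_card [Fintype m] [DecidableEq n]
    (A : Matrix m n ℝ) (h : A.rank = Fintype.card n) : IsUnit (Aᵀ * A) := by
  simpa using (PosDef.conjTranspose_mul_self A (mulVec_injective_of_rank_eq_card A h)).isUnit

section Append

variable {R : Type*} [NonUnitalNonAssocSemiring R] {r l : ℕ}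

theorem dotProduct_append (u u' : Fin r → R) (v v' : Fin l → R) :
    Fin.append u v ⬝ᵥ Fin.append u' v' = u ⬝ᵥ u' + v ⬝ᵥ v' := by
  simp [dotProduct, Fin.sum_univ_add]

theorem mulVec_append (C : Matrix m (Fin (r + l)) R) (u : Fin r → R) (v : Fin l → R) :
    C *ᵥ Fin.append u v =
      C.submatrix id (Fin.castAdd l) *ᵥ u + C.submatrix id (Fin.natAdd r) *ᵥ v := by
  ext i
  simp [mulVec, dotProduct, Fin.sum_univ_add]

end Append

variable [DecidableEq n]

theorem IsHermitian.forall_eigenvalues_le_iff {H : Matrix n n ℝ} (hH : H.IsHermitian) (c : ℝ) :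
    (∀ i, hH.eigenvalues i ≤ c) ↔ ∀ x, x ⬝ᵥ (H *ᵥ x) ≤ c * (x ⬝ᵥ x) := by
  have hquad (x : n → ℝ) : star x ⬝ᵥ ((algebraMap ℝ (Matrix n n ℝ) c - H) *ᵥ x)
      = c * (x ⬝ᵥ x) - x ⬝ᵥ (H *ᵥ x) := by
    rw [Algebra.algebraMap_eq_smul_one, sub_mulVec, smul_mulVec, one_mulVec, dotProduct_sub,
      dotProduct_smul, star_trivial, smul_eq_mul]
  calc (∀ i, hH.eigenvalues i ≤ c)
      ↔ H ≤ algebraMap ℝ (Matrix n n ℝ) c := by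
        rw [le_algebraMap_iff_spectrum_le (ha := hH.isSelfAdjoint),
          hH.spectrum_real_eq_range_eigenvalues, Set.forall_mem_range]
    _ ↔ ∀ x, x ⬝ᵥ (H *ᵥ x) ≤ c * (x ⬝ᵥ x) := by
        rw [le_iff, posSemidef_iff_dotProduct_mulVec]
        simp only [hquad, sub_nonneg]
        exact and_iff_right ((IsSelfAdjoint.algebraMap _ (.all c)).sub hH.isSelfAdjoint)

end Matrix

section SingularValue

variable {a b : ℕ} (M : Matrix (Fin a) (Fin b) ℝ)

theorem singularValue_one_nonneg : 0 ≤ singularValue M 1 := by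
  unfold singularValue
  split_ifs <;> positivity

theorem singularValue_one_le_iff {c : ℝ} (hc : 0 ≤ c) :
    singularValue M 1 ≤ c ↔ ∀ x, (M *ᵥ x) ⬝ᵥ (M *ᵥ x) ≤ c ^ 2 * (x ⬝ᵥ x) := by
  obtain _ | b := b
  · simp [singularValue, hc, dotProduct]
  have hG : (Mᵀ * M).IsHermitian := isHermitian_conjTranspose_mul_self M
  have hσ : singularValue M 1 = √(hG.eigenvalues (Tuple.sort hG.eigenvalues (Fin.last b))) := by
    rw [singularValue, dif_pos (by omega)]
    rfl
  simp only [hσ, Real.sqrt_le_iff, hc, true_and, ← dotProduct_transpose_mul_self_mulVec,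
    ← hG.forall_eigenvalues_le_iff]
  exact ⟨fun h i => (Tuple.le_apply_sort_last _ i).trans h, fun h => h _⟩

end SingularValue

section PseudoInverse

variable {m n : ℕ} {A : Matrix (Fin m) (Fin n) ℝ}

theorem isUnit_det_transpose_mul_self (h : A.rank = n) : IsUnit (Aᵀ * A).det :=
  (isUnit_iff_isUnit_det _).mp <|
    isUnit_transpose_mul_self_of_rank_eq_card A (h.trans (Fintype.card_fin n).symm)

theorem pinvFCR_mul_self (h : A.rank = n) : pinvFCR A * A = 1 := by
  rw [pinvFCR, Matrix.mul_assoc, nonsing_inv_mul _ (isUnit_det_transpose_mul_self h)]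

theorem transpose_mul_self_mul_pinvFCR (h : A.rank = n) : Aᵀ * A * pinvFCR A = Aᵀ :=
  mul_nonsing_inv_cancel_left _ _ (isUnit_det_transpose_mul_self h)

theorem dotProduct_mulVec_pinvFCR_le (h : A.rank = n) (x : Fin m → ℝ) :
    (A *ᵥ (pinvFCR A *ᵥ x)) ⬝ᵥ (A *ᵥ (pinvFCR A *ᵥ x)) ≤ x ⬝ᵥ x := by
  set y := pinvFCR A *ᵥ x
  set p := A *ᵥ y
  have hnormal : (Aᵀ * A) *ᵥ y = Aᵀ *ᵥ x := by
    rw [mulVec_mulVec, transpose_mul_self_mul_pinvFCR h]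
  have hpp : p ⬝ᵥ p = p ⬝ᵥ x :=
    calc p ⬝ᵥ p = y ⬝ᵥ ((Aᵀ * A) *ᵥ y) := (dotProduct_transpose_mul_self_mulVec A y).symm
      _ = p ⬝ᵥ x := by rw [hnormal, dotProduct_mulVec, vecMul_transpose]
  have hres := dotProduct_self_star_nonneg (x - p)
  rw [star_trivial, sub_dotProduct, dotProduct_sub, dotProduct_sub, dotProduct_comm x p] at hres
  linarith

theorem dotProduct_self_le_singularValue_pinvFCR_sq (h : A.rank = n) (z : Fin n → ℝ) :
    z ⬝ᵥ z ≤ singularValue (pinvFCR A) 1 ^ 2 * ((A *ᵥ z) ⬝ᵥ (A *ᵥ z)) := by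
  simpa [mulVec_mulVec, pinvFCR_mul_self h] using
    (singularValue_one_le_iff _ (singularValue_one_nonneg (pinvFCR A))).mp le_rfl (A *ᵥ z)

end PseudoInverse

theorem pinv_norm_mono_leading_columns_general
    {m n r l : ℕ} (hrl : r + l ≤ n)
    (A : Matrix (Fin m) (Fin n) ℝ)
    (h1 : (A.submatrix id (Fin.castLE (le_trans (Nat.le_add_right r l) hrl))).rank = r)
    (h2 : (A.submatrix id (Fin.castLE hrl)).rank = r + l) :
    singularValue (pinvFCR (A.submatrix id
        (Fin.castLE (le_trans (Nat.le_add_right r l) hrl)))) 1 ≤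
      singularValue (pinvFCR (A.submatrix id (Fin.castLE hrl))) 1 := by
  set B := A.submatrix id (Fin.castLE (le_trans (Nat.le_add_right r l) hrl))
  set C := A.submatrix id (Fin.castLE hrl)
  set σ := singularValue (pinvFCR C) 1
  -- `B` is definitionally the block of the first `r` columns of `C`.
  have hCB (y : Fin r → ℝ) : C *ᵥ Fin.append y 0 = B *ᵥ y := by
    rw [C.mulVec_append, mulVec_zero, add_zero]
    rfl
  rw [singularValue_one_le_iff _ (singularValue_one_nonneg _)]
  intro x
  set y := pinvFCR B *ᵥ x
  calc y ⬝ᵥ y ≤ σ ^ 2 * ((B *ᵥ y) ⬝ᵥ (B *ᵥ y)) := by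
        simpa [hCB, dotProduct_append] using
          dotProduct_self_le_singularValue_pinvFCR_sq h2 (Fin.append y 0)
    _ ≤ σ ^ 2 * (x ⬝ᵥ x) := by gcongr; exact dotProduct_mulVec_pinvFCR_le h1 x

/-- If `r + l ≤ n ≤ m`, the first `r` columns of `A ∈ ℝ^{m×n}` have rank `r`, and the
first `r + l` columns have rank `r + l`, then `‖A_{m,r}⁺‖ ≤ ‖A_{m,r+l}⁺‖` in the spectral
norm (`singularValue · 1`). -/
theorem pinv_norm_mono_leading_columns
    {m n r l : ℕ} (hrl : r + l ≤ n) (hnm : n ≤ m)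
    (A : Matrix (Fin m) (Fin n) ℝ)
    (h1 : (A.submatrix id (Fin.castLE (le_trans (Nat.le_add_right r l) hrl))).rank = r)
    (h2 : (A.submatrix id (Fin.castLE hrl)).rank = r + l) :
    singularValue (pinvFCR (A.submatrix id
        (Fin.castLE (le_trans (Nat.le_add_right r l) hrl)))) 1 ≤
      singularValue (pinvFCR (A.submatrix id (Fin.castLE hrl))) 1 :=
  pinv_norm_mono_leading_columns_general hrl A h1 h2
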